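/- Let Ω ⊆ ℂ be a bounded open set and let z1, z2 ∈ Ω with z1 ≠ z2. Define s_Ω(z1, z2) = sSup { |p(z1)/q(z1)|² : (p, q) an admissible rational function for Ω with ‖p/q‖_Ω ≤ 1 and p.eval z2 = 0 }. Let s be a real number with s > 0 and s² = 1/s_Ω(z1, z2) − 1, let μ ∈ ℂ, and let A = !![z1, 0; (s * μ) * (z1 − z2), z2]. Then ‖r(A)‖ ≤ 1 for every admissible rational function r for Ω with ‖r‖_Ω ≤ 1 if and only if |μ| ≤ 1. -/

import Mathlib

/-- The operator norm (on the Euclidean space `ℂ²`) of the value of the rational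
function `p/q` at the `2 × 2` matrix `A`. -/
noncomputable def ratNormAt (A : Matrix (Fin 2) (Fin 2) ℂ) (p q : Polynomial ℂ) : ℝ :=
  ‖Matrix.toEuclideanCLM (𝕜 := ℂ) (Polynomial.aeval A p * (Polynomial.aeval A q)⁻¹)‖

/-!
With `a = r(z₁)` and `b = r(z₂)`, the matrix `A = [z₁ 0; d(z₁ - z₂) z₂]` satisfies
`r(A) = [a 0; d(a - b) b]`, and such a matrix is a contraction iff `|a|, |b| ≤ 1` and
`|d|² |a - b|² ≤ (1 - |a|²)(1 - |b|²)`. Composing `r` with the disc automorphism that moves `b`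
to `0` gives a competitor in the definition of `s_Ω`, whence the Schwarz–Pick type bound
`(1 - s_Ω) |a - b|² ≤ s_Ω (1 - |a|²)(1 - |b|²)`. Conversely, for `r(z₂) = 0` contractivity of
`r(A)` reads `|a|² (1 + |d|²) ≤ 1`. So `r(A)` is contractive for every `r` iff
`s_Ω (1 + |d|²) ≤ 1`, which for `d = sμ` and `s_Ω (1 + s²) = 1` means `|μ| ≤ 1`.
-/

open Complex ComplexConjugate Matrix Polynomial

theorem sq_mul_add_mul_le {α q r u v : ℝ} (hα : 0 ≤ α) (hq : q ^ 2 ≤ 1)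
    (h : r ^ 2 ≤ α * (1 - q ^ 2)) : (r * u + q * v) ^ 2 ≤ α * u ^ 2 + v ^ 2 := by
  obtain rfl | hα := hα.eq_or_lt
  · obtain rfl : r = 0 := by nlinarith
    nlinarith [sq_nonneg v]
  · -- α (α u² + v² - (r u + q v)²) = (α q u - r v)² + (α u² + v²) (α (1 - q²) - r²)
    refine le_of_mul_le_mul_left ?_ hα
    nlinarith [sq_nonneg (α * q * u - r * v),
      mul_nonneg (by positivity : 0 ≤ α * u ^ 2 + v ^ 2) (sub_nonneg.2 h)]

namespace Matrix

variable {R : Type*} [CommRing R]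

def lowerTriAlgHom (d : R) : R × R →ₐ[R] Matrix (Fin 2) (Fin 2) R where
  toFun x := !![x.1, 0; d * (x.1 - x.2), x.2]
  map_one' := by ext i j; fin_cases i <;> fin_cases j <;> simp
  map_mul' x y := by ext i j; fin_cases i <;> fin_cases j <;> simp; ring
  map_zero' := by ext i j; fin_cases i <;> fin_cases j <;> simp
  map_add' x y := by ext i j; fin_cases i <;> fin_cases j <;> simp; ring
  commutes' r := by ext i j; fin_cases i <;> fin_cases j <;> simp [algebraMap_matrix_apply]

theorem lowerTriAlgHom_apply (d : R) (x : R × R) :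
    lowerTriAlgHom d x = !![x.1, 0; d * (x.1 - x.2), x.2] := rfl

theorem aeval_lowerTri (d z₁ z₂ : R) (p : R[X]) :
    aeval !![z₁, 0; d * (z₁ - z₂), z₂] p =
      !![p.eval z₁, 0; d * (p.eval z₁ - p.eval z₂), p.eval z₂] := by
  rw [← lowerTriAlgHom_apply d (z₁, z₂), aeval_algHom_apply, aeval_prod_apply]
  rfl

theorem aeval_lowerTri_mul_inv {K : Type*} [Field K] (d z₁ z₂ : K) (p q : K[X])
    (h₁ : q.eval z₁ ≠ 0) (h₂ : q.eval z₂ ≠ 0) :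
    aeval !![z₁, 0; d * (z₁ - z₂), z₂] p * (aeval !![z₁, 0; d * (z₁ - z₂), z₂] q)⁻¹ =
      !![p.eval z₁ / q.eval z₁, 0;
        d * (p.eval z₁ / q.eval z₁ - p.eval z₂ / q.eval z₂), p.eval z₂ / q.eval z₂] := by
  have hinv : (aeval !![z₁, 0; d * (z₁ - z₂), z₂] q)⁻¹ =
      lowerTriAlgHom d ((q.eval z₁)⁻¹, (q.eval z₂)⁻¹) := by
    rw [aeval_lowerTri, ← lowerTriAlgHom_apply d (q.eval z₁, q.eval z₂)]
    refine inv_eq_right_inv ?_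
    rw [← map_mul, Prod.mk_mul_mk, mul_inv_cancel₀ h₁, mul_inv_cancel₀ h₂, Prod.mk_one_one, map_one]
  rw [hinv, aeval_lowerTri, ← lowerTriAlgHom_apply d (p.eval z₁, p.eval z₂), ← map_mul]
  simp only [Prod.mk_mul_mk, ← div_eq_mul_inv]
  rfl

theorem sq_norm_toEuclideanCLM_fin_two (M : Matrix (Fin 2) (Fin 2) ℂ)
    (x : EuclideanSpace ℂ (Fin 2)) :
    ‖toEuclideanCLM (𝕜 := ℂ) M x‖ ^ 2 =
      ‖M 0 0 * x 0 + M 0 1 * x 1‖ ^ 2 + ‖M 1 0 * x 0 + M 1 1 * x 1‖ ^ 2 := by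
  simp [EuclideanSpace.norm_sq_eq, Fin.sum_univ_two, mulVec, dotProduct]

theorem norm_toEuclideanCLM_lowerTri_le_one {a b t : ℂ} (ha : ‖a‖ ≤ 1) (hb : ‖b‖ ≤ 1)
    (ht : ‖t‖ ^ 2 ≤ (1 - ‖a‖ ^ 2) * (1 - ‖b‖ ^ 2)) :
    ‖toEuclideanCLM (𝕜 := ℂ) !![a, 0; t, b]‖ ≤ 1 := by
  refine ContinuousLinearMap.opNorm_le_bound _ zero_le_one fun x ↦ ?_
  rw [one_mul, ← sq_le_sq₀ (norm_nonneg _) (norm_nonneg _), sq_norm_toEuclideanCLM_fin_two,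
    EuclideanSpace.norm_sq_eq, Fin.sum_univ_two]
  have htri : ‖t * x 0 + b * x 1‖ ≤ ‖t‖ * ‖x 0‖ + ‖b‖ * ‖x 1‖ :=
    (norm_add_le _ _).trans_eq (by rw [norm_mul, norm_mul])
  have hcs := sq_mul_add_mul_le (u := ‖x 0‖) (v := ‖x 1‖)
    (sub_nonneg.2 (pow_le_one₀ (norm_nonneg a) ha)) (pow_le_one₀ (norm_nonneg b) hb) ht
  have := pow_le_pow_left₀ (norm_nonneg _) htri 2
  simp only [of_apply, cons_val', cons_val_zero, cons_val_one, empty_val', cons_val_fin_one,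
    zero_mul, add_zero, norm_mul, mul_pow]
  linarith

theorem sq_norm_add_sq_norm_le_one_of_norm_toEuclideanCLM_le_one {a b t : ℂ}
    (h : ‖toEuclideanCLM (𝕜 := ℂ) !![a, 0; t, b]‖ ≤ 1) : ‖a‖ ^ 2 + ‖t‖ ^ 2 ≤ 1 := by
  have hcol := (toEuclideanCLM (𝕜 := ℂ) !![a, 0; t, b]).le_of_opNorm_le h
    (EuclideanSpace.single 0 1)
  rw [PiLp.norm_single, norm_one, mul_one] at hcol
  have := pow_le_one₀ (norm_nonneg _) hcol (n := 2)
  simpa [sq_norm_toEuclideanCLM_fin_two] using this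

end Matrix

theorem sq_norm_sub_conj_mul_sub_sq_norm_sub_mul (b P Q : ℂ) :
    ‖Q - conj b * P‖ ^ 2 - ‖P - b * Q‖ ^ 2 = (1 - ‖b‖ ^ 2) * (‖Q‖ ^ 2 - ‖P‖ ^ 2) := by
  simp only [Complex.sq_norm, normSq_apply, sub_re, sub_im, mul_re, mul_im, conj_re, conj_im]
  ring

theorem sub_conj_mul_ne_zero {b P Q : ℂ} (hb : ‖b‖ < 1) (hPQ : ‖P‖ ≤ ‖Q‖) (hQ : Q ≠ 0) :
    Q - conj b * P ≠ 0 := by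
  rw [sub_ne_zero]
  intro h
  have : ‖Q‖ ≤ ‖b‖ * ‖Q‖ := calc
    ‖Q‖ = ‖b‖ * ‖P‖ := by rw [h, norm_mul, norm_conj]
    _ ≤ ‖b‖ * ‖Q‖ := by gcongr
  nlinarith [norm_pos_iff.2 hQ]

theorem norm_sub_mul_le_norm_sub_conj_mul {b P Q : ℂ} (hb : ‖b‖ ≤ 1) (hPQ : ‖P‖ ≤ ‖Q‖) :
    ‖P - b * Q‖ ≤ ‖Q - conj b * P‖ := by
  have := sq_norm_sub_conj_mul_sub_sq_norm_sub_mul b P Q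
  refine (sq_le_sq₀ (norm_nonneg _) (norm_nonneg _)).1 ?_
  nlinarith [mul_nonneg (sub_nonneg.2 (pow_le_one₀ (n := 2) (norm_nonneg b) hb))
    (sub_nonneg.2 (pow_le_pow_left₀ (norm_nonneg P) hPQ 2))]

theorem one_sub_mul_sq_norm_sub_le {a b : ℂ} {S : ℝ} (ha : ‖a‖ ≤ 1) (hb : ‖b‖ < 1)
    (h : ‖(a - b) / (1 - conj b * a)‖ ^ 2 ≤ S) :
    (1 - S) * ‖a - b‖ ^ 2 ≤ S * ((1 - ‖a‖ ^ 2) * (1 - ‖b‖ ^ 2)) := by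
  have hden : ‖1 - conj b * a‖ ^ 2 = ‖a - b‖ ^ 2 + (1 - ‖a‖ ^ 2) * (1 - ‖b‖ ^ 2) := by
    have := sq_norm_sub_conj_mul_sub_sq_norm_sub_mul b a 1
    rw [mul_one, norm_one, one_pow] at this
    linarith
  have hpos : 0 < ‖1 - conj b * a‖ ^ 2 := by
    have := sub_conj_mul_ne_zero hb (ha.trans_eq norm_one.symm) one_ne_zero
    positivity
  rw [norm_div, div_pow, div_le_iff₀ hpos, hden] at h
  linarith

def caratheodorySet (Ω : Set ℂ) (z₁ z₂ : ℂ) : Set ℝ :=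
  {x : ℝ | ∃ p q : Polynomial ℂ,
      (∀ w ∈ closure Ω, q.eval w ≠ 0) ∧
      (∀ w ∈ closure Ω, ‖p.eval w / q.eval w‖ ≤ 1) ∧
      p.eval z₂ = 0 ∧ x = ‖p.eval z₁ / q.eval z₁‖ ^ 2}

section Caratheodory

variable {Ω : Set ℂ} {z₁ z₂ : ℂ}

theorem zero_mem_caratheodorySet : (0 : ℝ) ∈ caratheodorySet Ω z₁ z₂ :=
  ⟨0, 1, by simp, by simp, by simp, by simp⟩

theorem bddAbove_caratheodorySet (hz₁ : z₁ ∈ Ω) : BddAbove (caratheodorySet Ω z₁ z₂) := by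
  refine ⟨1, ?_⟩
  rintro x ⟨p, q, -, hpq, -, rfl⟩
  exact pow_le_one₀ (norm_nonneg _) (hpq z₁ (subset_closure hz₁))

variable {p q : ℂ[X]} (hq : ∀ w ∈ closure Ω, q.eval w ≠ 0)
  (hpq : ∀ w ∈ closure Ω, ‖p.eval w / q.eval w‖ ≤ 1)
include hq hpq

theorem sq_norm_mobius_le_sSup (hz₁ : z₁ ∈ Ω) (hz₂ : z₂ ∈ Ω)
    (hb : ‖p.eval z₂ / q.eval z₂‖ < 1) :
    ‖(p.eval z₁ / q.eval z₁ - p.eval z₂ / q.eval z₂) /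
        (1 - conj (p.eval z₂ / q.eval z₂) * (p.eval z₁ / q.eval z₁))‖ ^ 2 ≤
      sSup (caratheodorySet Ω z₁ z₂) := by
  set b := p.eval z₂ / q.eval z₂
  have hle : ∀ w ∈ closure Ω, ‖p.eval w‖ ≤ ‖q.eval w‖ := fun w hw ↦ by
    simpa [norm_div, div_le_one (norm_pos_iff.2 (hq w hw))] using hpq w hw
  have hq' : ∀ w ∈ closure Ω, (q - C (conj b) * p).eval w ≠ 0 := fun w hw ↦ by
    simpa using sub_conj_mul_ne_zero hb (hle w hw) (hq w hw)
  refine le_csSup (bddAbove_caratheodorySet hz₁)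
    ⟨p - C b * q, q - C (conj b) * p, hq', ?_, ?_, ?_⟩
  · intro w hw
    rw [norm_div, div_le_one (norm_pos_iff.2 (hq' w hw))]
    simpa using norm_sub_mul_le_norm_sub_conj_mul hb.le (hle w hw)
  · simp [b, div_mul_cancel₀ _ (hq z₂ (subset_closure hz₂))]
  · have h₁ := hq z₁ (subset_closure hz₁)
    have h₁' := hq' z₁ (subset_closure hz₁)
    simp only [eval_sub, eval_mul, eval_C] at h₁' ⊢
    congr 2
    field_simp

theorem one_sub_sSup_mul_sq_norm_sub_le (hz₁ : z₁ ∈ Ω) (hz₂ : z₂ ∈ Ω) :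
    (1 - sSup (caratheodorySet Ω z₁ z₂)) *
        ‖p.eval z₁ / q.eval z₁ - p.eval z₂ / q.eval z₂‖ ^ 2 ≤
      sSup (caratheodorySet Ω z₁ z₂) *
        ((1 - ‖p.eval z₁ / q.eval z₁‖ ^ 2) * (1 - ‖p.eval z₂ / q.eval z₂‖ ^ 2)) := by
  set S := sSup (caratheodorySet Ω z₁ z₂)
  set a := p.eval z₁ / q.eval z₁
  set b := p.eval z₂ / q.eval z₂
  -- The Möbius argument needs `‖b‖ < 1`; apply it to `t • r` for `t < 1` and let `t → 1`.
  have hscaled : ∀ t ∈ Set.Ico (0 : ℝ) 1,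
      (1 - S) * (t ^ 2 * ‖a - b‖ ^ 2) ≤ S * ((1 - t ^ 2 * ‖a‖ ^ 2) * (1 - t ^ 2 * ‖b‖ ^ 2)) := by
    rintro t ⟨ht₀, ht₁⟩
    have hnorm : ∀ x : ℂ, ‖(t : ℂ) * x‖ = t * ‖x‖ := fun x ↦ by
      rw [norm_mul, norm_real, Real.norm_of_nonneg ht₀]
    have heval : ∀ w, (C (t : ℂ) * p).eval w / q.eval w = t * (p.eval w / q.eval w) := fun w ↦ by
      rw [eval_mul, eval_C, mul_div_assoc]
    have htpq : ∀ w ∈ closure Ω, ‖(C (t : ℂ) * p).eval w / q.eval w‖ ≤ 1 := fun w hw ↦ by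
      rw [heval, hnorm]
      exact mul_le_one₀ ht₁.le (norm_nonneg _) (hpq w hw)
    have htb : ‖(C (t : ℂ) * p).eval z₂ / q.eval z₂‖ < 1 := by
      rw [heval, hnorm]
      exact (mul_le_of_le_one_right ht₀ (hpq z₂ (subset_closure hz₂))).trans_lt ht₁
    have := one_sub_mul_sq_norm_sub_le (htpq z₁ (subset_closure hz₁)) htb
      (sq_norm_mobius_le_sSup hq htpq hz₁ hz₂ htb)
    simpa only [heval, ← mul_sub, hnorm, mul_pow] using this
  have hclosure : (1 : ℝ) ∈ closure (Set.Ico 0 1) := by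
    rw [closure_Ico zero_ne_one]
    exact ⟨zero_le_one, le_rfl⟩
  simpa using le_on_closure hscaled (by fun_prop) (by fun_prop) hclosure

end Caratheodory

theorem forall_ratNormAt_le_one_iff {Ω : Set ℂ} {z₁ z₂ : ℂ} (hz₁ : z₁ ∈ Ω) (hz₂ : z₂ ∈ Ω)
    (d : ℂ) (hS : 0 < sSup (caratheodorySet Ω z₁ z₂)) :
    (∀ p q : ℂ[X], (∀ w ∈ closure Ω, q.eval w ≠ 0) →
      (∀ w ∈ closure Ω, ‖p.eval w / q.eval w‖ ≤ 1) →
      ratNormAt !![z₁, 0; d * (z₁ - z₂), z₂] p q ≤ 1) ↔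
    sSup (caratheodorySet Ω z₁ z₂) * (1 + ‖d‖ ^ 2) ≤ 1 := by
  have hz₁' := subset_closure hz₁
  have hz₂' := subset_closure hz₂
  have hnorm : ∀ p q : ℂ[X], (∀ w ∈ closure Ω, q.eval w ≠ 0) →
      ratNormAt !![z₁, 0; d * (z₁ - z₂), z₂] p q =
        ‖toEuclideanCLM (𝕜 := ℂ) !![p.eval z₁ / q.eval z₁, 0;
          d * (p.eval z₁ / q.eval z₁ - p.eval z₂ / q.eval z₂), p.eval z₂ / q.eval z₂]‖ :=
    fun p q hq ↦ by rw [ratNormAt, aeval_lowerTri_mul_inv _ _ _ _ _ (hq z₁ hz₁') (hq z₂ hz₂')]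
  constructor
  · intro h
    rw [← le_div_iff₀ (by positivity)]
    refine csSup_le ⟨0, zero_mem_caratheodorySet⟩ ?_
    rintro x ⟨p, q, hq, hpq, hp, rfl⟩
    have := sq_norm_add_sq_norm_le_one_of_norm_toEuclideanCLM_le_one
      ((hnorm p q hq).symm.trans_le (h p q hq hpq))
    rw [hp, zero_div, sub_zero, norm_mul, mul_pow] at this
    rw [le_div_iff₀ (by positivity)]
    linarith
  · intro hd p q hq hpq
    rw [hnorm p q hq]
    refine norm_toEuclideanCLM_lowerTri_le_one (hpq z₁ hz₁') (hpq z₂ hz₂') ?_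
    have key := one_sub_sSup_mul_sq_norm_sub_le hq hpq hz₁ hz₂
    refine le_of_mul_le_mul_left ?_ hS
    rw [norm_mul, mul_pow]
    nlinarith [sq_nonneg ‖p.eval z₁ / q.eval z₁ - p.eval z₂ / q.eval z₂‖]

theorem stmt_9_general (Ω : Set ℂ)
    (z1 z2 : ℂ) (hz1 : z1 ∈ Ω) (hz2 : z2 ∈ Ω)
    (sΩ : ℝ)
    (hsΩ : sΩ = sSup {x : ℝ | ∃ p q : Polynomial ℂ,
      (∀ w ∈ closure Ω, q.eval w ≠ 0) ∧
      (∀ w ∈ closure Ω, ‖p.eval w / q.eval w‖ ≤ 1) ∧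
      p.eval z2 = 0 ∧ x = ‖p.eval z1 / q.eval z1‖ ^ 2})
    (s : ℝ) (hs : 0 < s) (hs2 : s ^ 2 = 1 / sΩ - 1)
    (μ : ℂ)
    (A : Matrix (Fin 2) (Fin 2) ℂ)
    (hA : A = !![z1, 0; ((s : ℂ) * μ) * (z1 - z2), z2]) :
    (∀ p q : Polynomial ℂ,
      (∀ w ∈ closure Ω, q.eval w ≠ 0) →
      (∀ w ∈ closure Ω, ‖p.eval w / q.eval w‖ ≤ 1) →
      ratNormAt A p q ≤ 1) ↔ ‖μ‖ ≤ 1 := by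
  have hS : sSup (caratheodorySet Ω z1 z2) = sΩ := hsΩ.symm
  have hinv : 1 / sΩ = 1 + s ^ 2 := by linarith
  have hpos : 0 < sΩ := one_div_pos.1 (hinv ▸ by positivity)
  have hsΩ_mul : sΩ * (1 + s ^ 2) = 1 := by rw [← hinv, mul_one_div_cancel hpos.ne']
  rw [hA, forall_ratNormAt_le_one_iff hz1 hz2 _ (hS ▸ hpos), hS, norm_mul, norm_real,
    Real.norm_of_nonneg hs.le, mul_pow, ← sq_le_one_iff₀ (norm_nonneg μ)]
  calc sΩ * (1 + s ^ 2 * ‖μ‖ ^ 2) ≤ 1 ↔ sΩ * (1 + s ^ 2 * ‖μ‖ ^ 2) ≤ sΩ * (1 + s ^ 2) := by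
        rw [hsΩ_mul]
    _ ↔ ‖μ‖ ^ 2 ≤ 1 := by
        rw [mul_le_mul_iff_right₀ hpos, add_le_add_iff_left,
          mul_le_iff_le_one_right (by positivity)]

theorem stmt_9 (Ω : Set ℂ) (hΩo : IsOpen Ω) (hΩb : Bornology.IsBounded Ω)
    (z1 z2 : ℂ) (hz1 : z1 ∈ Ω) (hz2 : z2 ∈ Ω) (hz : z1 ≠ z2)
    (sΩ : ℝ)
    (hsΩ : sΩ = sSup {x : ℝ | ∃ p q : Polynomial ℂ,
      (∀ w ∈ closure Ω, q.eval w ≠ 0) ∧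
      (∀ w ∈ closure Ω, ‖p.eval w / q.eval w‖ ≤ 1) ∧
      p.eval z2 = 0 ∧ x = ‖p.eval z1 / q.eval z1‖ ^ 2})
    (s : ℝ) (hs : 0 < s) (hs2 : s ^ 2 = 1 / sΩ - 1)
    (μ : ℂ)
    (A : Matrix (Fin 2) (Fin 2) ℂ)
    (hA : A = !![z1, 0; ((s : ℂ) * μ) * (z1 - z2), z2]) :
    (∀ p q : Polynomial ℂ,
      (∀ w ∈ closure Ω, q.eval w ≠ 0) →
      (∀ w ∈ closure Ω, ‖p.eval w / q.eval w‖ ≤ 1) →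
      ratNormAt A p q ≤ 1) ↔ ‖μ‖ ≤ 1 :=
  stmt_9_general Ω z1 z2 hz1 hz2 sΩ hsΩ s hs hs2 μ A hA
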